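/- Let ∇ be a Cartan connection on L. Then for all X, Y, Z ∈ L: R∇(ρ(X), ρ(Y))Z = ∇̄_Z(T∇̄(X, Y)) − T∇̄(∇̄_Z X, Y) − T∇̄(X, ∇̄_Z Y). (Equation (abba) of Section 5.5: the curvature of a Cartan connection, evaluated along the anchor, equals the covariant derivative of the torsion of the induced representation of 𝔤 on itself.) -/
import Mathlib


variable {R A L : Type*} [CommRing R] [CommRing A] [Algebra R A]
  [LieRing L] [LieAlgebra R L] [Module A L]
  [IsScalarTower R A L] [SMulCommClass R A L] [SMulCommClass A R L]

/-- The induced `𝔤`-connection on derivations: `∇̄_X V := ρ(∇_V X) + ⁅ρ(X), V⁆`. -/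
def barDer (ρ : L →ₗ[A] Derivation R A A) (D : Derivation R A A → L → L)
    (X : L) (V : Derivation R A A) : Derivation R A A :=
  ρ (D V X) + ⁅ρ X, V⁆

/-- The induced `𝔤`-connection of `L` on itself: `∇̄_X Y := ∇_{ρ(Y)} X + ⁅X, Y⁆`. -/
def barSelf (ρ : L →ₗ[A] Derivation R A A) (D : Derivation R A A → L → L)
    (X Y : L) : L :=
  D (ρ Y) X + ⁅X, Y⁆

/-- The torsion `T∇̄(X, Y) := ∇̄_X Y − ∇̄_Y X − ⁅X, Y⁆` of `∇̄`. -/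
def torsionBarSelf (ρ : L →ₗ[A] Derivation R A A) (D : Derivation R A A → L → L)
    (X Y : L) : L :=
  barSelf ρ D X Y - barSelf ρ D Y X - ⁅X, Y⁆

/-- The curvature `R∇(V, W)Z := ∇_V(∇_W Z) − ∇_W(∇_V Z) − ∇_{⁅V,W⁆} Z` of `∇`. -/
def curvConn (D : Derivation R A A → L → L) (V W : Derivation R A A) (Z : L) : L :=
  D V (D W Z) - D W (D V Z) - D ⁅V, W⁆ Z

/-- `D` is a connection on `L`: additive in both arguments, `A`-linear in the
derivation argument, and satisfying the Leibniz rule. -/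
def IsConnection (D : Derivation R A A → L → L) : Prop :=
  (∀ (V W : Derivation R A A) (X : L), D (V + W) X = D V X + D W X) ∧
  (∀ (V : Derivation R A A) (X Y : L), D V (X + Y) = D V X + D V Y) ∧
  (∀ (a : A) (V : Derivation R A A) (X : L), D (a • V) X = a • D V X) ∧
  (∀ (V : Derivation R A A) (a : A) (X : L), D V (a • X) = a • D V X + V a • X)

/-- `D` is a Cartan connection: it is compatible with the bracket of `L`. -/
def IsCartanConnection (ρ : L →ₗ[A] Derivation R A A)
    (D : Derivation R A A → L → L) : Prop :=
  ∀ (V : Derivation R A A) (X Y : L),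
    D V ⁅X, Y⁆ = ⁅D V X, Y⁆ + ⁅X, D V Y⁆
      + D (barDer ρ D Y V) X - D (barDer ρ D X V) Y

/-- For a Cartan connection `∇` on `L`:
`R∇(ρ(X), ρ(Y))Z = ∇̄_Z(T∇̄(X, Y)) − T∇̄(∇̄_Z X, Y) − T∇̄(X, ∇̄_Z Y)` (equation (abba)). -/
theorem curvature_along_anchor
    (ρ : L →ₗ[A] Derivation R A A)
    (hanchor : ∀ X Y : L, ρ ⁅X, Y⁆ = ⁅ρ X, ρ Y⁆)
    (hleib : ∀ (X : L) (a : A) (Y : L), ⁅X, a • Y⁆ = a • ⁅X, Y⁆ + ρ X a • Y)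
    (D : Derivation R A A → L → L) (hD : IsConnection D)
    (hC : IsCartanConnection ρ D) :
    ∀ X Y Z : L,
      curvConn D (ρ X) (ρ Y) Z =
        barSelf ρ D Z (torsionBarSelf ρ D X Y)
          - torsionBarSelf ρ D (barSelf ρ D Z X) Y
          - torsionBarSelf ρ D X (barSelf ρ D Z Y) := by
  obtain ⟨hD1, hD2, _, _⟩ := hD
  have h01 : ∀ (X : L), D (0 : Derivation R A A) X = 0 := by
    intro X
    have h' := hD1 0 0 X
    rw [add_zero] at h'
    exact (left_eq_add.mp h')
  have hneg1 : ∀ (V : Derivation R A A) (X : L), D (-V) X = - D V X := by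
    intro V X
    have h := hD1 V (-V) X
    rw [add_neg_cancel, h01] at h
    exact eq_neg_of_add_eq_zero_left (by rw [add_comm]; exact h.symm)
  have hsub1 : ∀ (V W : Derivation R A A) (X : L), D (V - W) X = D V X - D W X := by
    intro V W X
    rw [sub_eq_add_neg, hD1, hneg1, sub_eq_add_neg]
  have h02 : ∀ (V : Derivation R A A), D V (0 : L) = 0 := by
    intro V
    have h' := hD2 V 0 0
    rw [add_zero] at h'
    exact (left_eq_add.mp h')
  have hneg2 : ∀ (V : Derivation R A A) (X : L), D V (-X) = - D V X := by
    intro V X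
    have h := hD2 V X (-X)
    rw [add_neg_cancel, h02] at h
    exact eq_neg_of_add_eq_zero_left (by rw [add_comm]; exact h.symm)
  have hsub2 : ∀ (V : Derivation R A A) (X Y : L), D V (X - Y) = D V X - D V Y := by
    intro V X Y
    rw [sub_eq_add_neg, hD2, hneg2, sub_eq_add_neg]
  intro X Y Z
  simp only [curvConn, torsionBarSelf, barSelf, barDer, IsCartanConnection] at *
  simp only [map_add, map_sub, hanchor, hsub1, hsub2, hD1, hD2, hneg1, hneg2,
    lie_add, add_lie, lie_sub, sub_lie, hC, map_add, hD1, hsub1, lie_lie]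
  rw [← lie_skew (D (ρ X) Z) Y]
  abel
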